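/- arXiv:2105.10589 — 2 statements merged into one kernel-verified Lean document; each statement's English description precedes it below -/
import Mathlib

section
/- Let n ≥ 1, let Ω ⊆ ℂⁿ be a bounded nonempty open set, and let φ : ℂⁿ → ℂⁿ be Borel measurable with φ(Ω) ⊆ Ω. Assume the closure of φ(Ω) is a compact subset of Ω. Then there exists C > 0 such that for every f in the Bergman class A²(Ω), ∫_Ω |f(φ(z))|² dV(z) ≤ C ∫_Ω |f|² dV. -/
open MeasureTheory ENNReal

/-- Lebesgue measure on `ℂⁿ` (the product of the Lebesgue measures on the factors). -/
noncomputable instance EuclideanSpace.measureSpaceComplex {n : ℕ} :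
    MeasureSpace (EuclideanSpace ℂ (Fin n)) :=
  { volume := (volume : Measure (Fin n → ℂ)).map (WithLp.toLp 2) }

instance {n : ℕ} : BorelSpace (EuclideanSpace ℂ (Fin n)) :=
  inferInstanceAs (BorelSpace (PiLp 2 (fun _ : Fin n => ℂ)))

/-- `f` belongs to the Bergman class `A²(Ω)`: holomorphic on `Ω` and square-integrable on `Ω`. -/
def BergmanA2 {n : ℕ} (Ω : Set (EuclideanSpace ℂ (Fin n)))
    (f : EuclideanSpace ℂ (Fin n) → ℂ) : Prop :=
  (∀ z ∈ Ω, DifferentiableAt ℂ f z) ∧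
    (∫⁻ z in Ω, (‖f z‖₊ : ℝ≥0∞) ^ 2) < ⊤

/-!
Iterating the one-variable mean value property over the coordinates gives the sub-mean value
inequality `vol(P) |f(z)|² ≤ ∫_P |f|²` on every polydisc `P` of centre `z` on which `f` is
holomorphic. The compact set `closure (φ '' Ω)` keeps a fixed distance `δ` from `∂Ω`, so polydiscs
of radius `δ` around its points lie in `Ω`, and `|f ∘ φ|²` is bounded on `Ω` by
`vol(P)⁻¹ ∫_Ω |f|²`; integrating over `Ω`, which has finite volume, gives the estimate.
-/

open Metric Real Set Function
open scoped NNReal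

section Disc

variable {c : ℂ} {R : ℝ}

theorem norm_circleAverage_le {E : Type*} [NormedAddCommGroup E] [NormedSpace ℝ E] (f : ℂ → E) :
    ‖circleAverage f c R‖ ≤ circleAverage (fun z ↦ ‖f z‖) c R := by
  rw [circleAverage_def, circleAverage_def, norm_smul, Real.norm_of_nonneg (by positivity),
    smul_eq_mul]
  gcongr
  exact intervalIntegral.norm_integral_le_integral_norm (by positivity)

theorem circleAverage_eq_integral_neg_pi_pi {E : Type*} [NormedAddCommGroup E] [NormedSpace ℝ E]
    (f : ℂ → E) :
    circleAverage f c R = (2 * π)⁻¹ • ∫ θ in -π..π, f (circleMap c R θ) := by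
  rw [circleAverage_eq_integral_add (-π), intervalIntegral.integral_comp_add_right
    (fun θ ↦ f (circleMap c R θ))]
  ring_nf

theorem DiffContOnCl.norm_sq_le_circleAverage {g : ℂ → ℂ} (hR : 0 ≤ R)
    (hg : DiffContOnCl ℂ g (ball c R)) :
    ‖g c‖ ^ 2 ≤ Real.circleAverage (fun z ↦ ‖g z‖ ^ 2) c R := by
  have hmean : Real.circleAverage (fun z ↦ g z * g z) c R = g c * g c := by
    rw [← abs_of_nonneg hR] at hg
    exact (hg.smul hg).circleAverage
  calc ‖g c‖ ^ 2 = ‖Real.circleAverage (fun z ↦ g z * g z) c R‖ := by rw [hmean, norm_mul, sq]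
    _ ≤ Real.circleAverage (fun z ↦ ‖g z * g z‖) c R := norm_circleAverage_le _
    _ = Real.circleAverage (fun z ↦ ‖g z‖ ^ 2) c R := by simp_rw [norm_mul, sq]

theorem DiffContOnCl.two_pi_mul_enorm_sq_le_lintegral_circleMap {g : ℂ → ℂ} (hR : 0 ≤ R)
    (hg : DiffContOnCl ℂ g (ball c R)) :
    ENNReal.ofReal (2 * π) * ‖g c‖ₑ ^ 2 ≤ ∫⁻ θ in Ioo (-π) π, ‖g (circleMap c R θ)‖ₑ ^ 2 := by
  have hcont : Continuous fun θ ↦ ‖g (circleMap c R θ)‖ ^ 2 :=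
    ((hg.continuousOn_ball.comp_continuous (continuous_circleMap c R)
      (circleMap_mem_closedBall c hR)).norm).pow 2
  have hmean := hg.norm_sq_le_circleAverage hR
  rw [circleAverage_eq_integral_neg_pi_pi, smul_eq_mul, le_inv_mul_iff₀ (by positivity),
    intervalIntegral.integral_of_le (by linarith [pi_pos])] at hmean
  calc ENNReal.ofReal (2 * π) * ‖g c‖ₑ ^ 2 = ENNReal.ofReal (2 * π * ‖g c‖ ^ 2) := by
        rw [ENNReal.ofReal_mul (by positivity : (0 : ℝ) ≤ 2 * π),
          ENNReal.ofReal_pow (norm_nonneg _), ofReal_norm]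
    _ ≤ ENNReal.ofReal (∫ θ in Ioc (-π) π, ‖g (circleMap c R θ)‖ ^ 2) := ofReal_le_ofReal hmean
    _ = ∫⁻ θ in Ioc (-π) π, ‖g (circleMap c R θ)‖ₑ ^ 2 := by
        rw [ofReal_integral_eq_lintegral_ofReal hcont.integrableOn_Ioc
          (Filter.Eventually.of_forall fun _ ↦ by positivity)]
        simp_rw [ENNReal.ofReal_pow (norm_nonneg _), ofReal_norm]
    _ = ∫⁻ θ in Ioo (-π) π, ‖g (circleMap c R θ)‖ₑ ^ 2 := setLIntegral_congr Ioo_ae_eq_Ioc.symm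

theorem setLIntegral_Ioo_zero_ofReal {r : ℝ} (hr : 0 ≤ r) :
    ∫⁻ ρ in Ioo 0 r, ENNReal.ofReal ρ = ENNReal.ofReal (r ^ 2 / 2) := by
  rw [← ofReal_integral_eq_lintegral_ofReal (f := fun ρ ↦ ρ)
      (μ := volume.restrict (Ioo 0 r))
      (continuous_id.integrableOn_Icc.mono_set Ioo_subset_Icc_self)
      (ae_restrict_of_forall_mem measurableSet_Ioo fun ρ hρ ↦ hρ.1.le),
    ← integral_Ioc_eq_integral_Ioo, ← intervalIntegral.integral_of_le hr, integral_id]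
  ring_nf

theorem circleMap_eq_add_polarCoord_symm (p : ℝ × ℝ) :
    circleMap c p.1 p.2 = c + Complex.polarCoord.symm p := by
  simp [circleMap, Complex.exp_mul_I]

theorem DifferentiableOn.ofReal_mul_enorm_sq_le_lintegral_ball {g : ℂ → ℂ} (hR : 0 ≤ R)
    (hg : DifferentiableOn ℂ g (ball c R)) :
    ENNReal.ofReal (π * R ^ 2) * ‖g c‖ₑ ^ 2 ≤ ∫⁻ z in ball c R, ‖g z‖ₑ ^ 2 := by
  set F := (ball c R).indicator fun z ↦ ‖g z‖ₑ ^ 2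
  set A := Ioo 0 R ×ˢ Ioo (-π) π
  have hA : MeasurableSet A := measurableSet_Ioo.prod measurableSet_Ioo
  have hcircle : ∀ p ∈ A, circleMap c p.1 p.2 ∈ ball c R := fun p hp ↦ by
    rw [mem_ball, dist_eq_norm, circleMap_sub_center, norm_circleMap_zero, abs_of_pos hp.1.1]
    exact hp.1.2
  have hmeas : AEMeasurable (fun p : ℝ × ℝ ↦ ENNReal.ofReal p.1 * ‖g (circleMap c p.1 p.2)‖ₑ ^ 2)
      ((volume.restrict (Ioo 0 R)).prod (volume.restrict (Ioo (-π) π))) := by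
    rw [Measure.prod_restrict, ← Measure.volume_eq_prod]
    refine measurable_fst.ennreal_ofReal.aemeasurable.mul (ContinuousOn.aemeasurable ?_ hA)
    exact (ENNReal.continuous_pow 2).comp_continuousOn
      (hg.continuousOn.comp (by fun_prop) hcircle).enorm
  -- Integrate the circle inequality against the polar-coordinate weight `ρ` over `0 < ρ < R`.
  calc ENNReal.ofReal (π * R ^ 2) * ‖g c‖ₑ ^ 2
      = (∫⁻ ρ in Ioo 0 R, ENNReal.ofReal ρ) * (ENNReal.ofReal (2 * π) * ‖g c‖ₑ ^ 2) := by
        rw [setLIntegral_Ioo_zero_ofReal hR, ← mul_assoc, ← ENNReal.ofReal_mul (by positivity)]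
        ring_nf
    _ = ∫⁻ ρ in Ioo 0 R, ENNReal.ofReal ρ * (ENNReal.ofReal (2 * π) * ‖g c‖ₑ ^ 2) :=
        (lintegral_mul_const _ measurable_id.ennreal_ofReal).symm
    _ ≤ ∫⁻ ρ in Ioo 0 R, ENNReal.ofReal ρ * ∫⁻ θ in Ioo (-π) π, ‖g (circleMap c ρ θ)‖ₑ ^ 2 := by
        refine setLIntegral_mono' measurableSet_Ioo fun ρ hρ ↦ ?_
        gcongr
        exact DiffContOnCl.two_pi_mul_enorm_sq_le_lintegral_circleMap hρ.1.le
          (hg.diffContOnCl_ball (closedBall_subset_ball hρ.2))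
    _ = ∫⁻ ρ in Ioo 0 R, ∫⁻ θ in Ioo (-π) π,
          ENNReal.ofReal ρ * ‖g (circleMap c ρ θ)‖ₑ ^ 2 := by
        simp_rw [lintegral_const_mul' _ _ ofReal_ne_top]
    _ = ∫⁻ p in A, ENNReal.ofReal p.1 * ‖g (circleMap c p.1 p.2)‖ₑ ^ 2 := by
        rw [Measure.volume_eq_prod, ← Measure.prod_restrict]
        exact (lintegral_prod _ hmeas).symm
    _ = ∫⁻ p in A, ENNReal.ofReal p.1 • F (c + Complex.polarCoord.symm p) := by
        refine setLIntegral_congr_fun hA fun p hp ↦ ?_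
        rw [← circleMap_eq_add_polarCoord_symm, smul_eq_mul]
        exact congrArg _ (indicator_of_mem (hcircle p hp) fun z ↦ ‖g z‖ₑ ^ 2).symm
    _ ≤ ∫⁻ p in polarCoord.target, ENNReal.ofReal p.1 • F (c + Complex.polarCoord.symm p) :=
        lintegral_mono_set (prod_mono Ioo_subset_Ioi_self subset_rfl)
    _ = ∫⁻ z in ball c R, ‖g z‖ₑ ^ 2 := by
        rw [Complex.lintegral_comp_polarCoord_symm (fun w ↦ F (c + w)),
          lintegral_add_left_eq_self, lintegral_indicator measurableSet_ball]

end Disc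

section Polydisc

variable {ι : Type*} [Fintype ι]

theorem DifferentiableOn.ofReal_pow_mul_enorm_sq_le_lintegral_ball {f : (ι → ℂ) → ℂ}
    {c : ι → ℂ} {r : ℝ} (hr : 0 < r) (hf : DifferentiableOn ℂ f (ball c r)) :
    ENNReal.ofReal (π * r ^ 2) ^ Fintype.card ι * ‖f c‖ₑ ^ 2 ≤ ∫⁻ z in ball c r, ‖f z‖ₑ ^ 2 := by
  classical
  set a := ENNReal.ofReal (π * r ^ 2)
  -- `f` is only controlled on the polydisc, while `lmarginal_insert` needs a measurable integrand.
  set F := (ball c r).indicator fun z ↦ ‖f z‖ₑ ^ 2 with hF_def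
  set μ : ι → Measure ℂ := fun i ↦ volume.restrict (ball (c i) r)
  have hF : Measurable F := by
    rw [hF_def, ← piecewise_eq_indicator]
    exact ((ENNReal.continuous_pow 2).comp_continuousOn hf.continuousOn.enorm).measurable_piecewise
      continuousOn_const measurableSet_ball
  -- Induction on the set `s` of integrated coordinates, which sit at the centre; each step is
  -- the disc inequality in the new coordinate `i`.
  have key : ∀ s : Finset ι, ∀ x : ι → ℂ, (∀ i ∉ s, x i ∈ ball (c i) r) →
      (∀ i ∈ s, x i = c i) → a ^ s.card * ‖f x‖ₑ ^ 2 ≤ (∫⋯∫⁻_s, F ∂μ) x := by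
    intro s
    induction s using Finset.induction_on with
    | empty =>
      intro x hx _
      have hxc : x ∈ ball c r := by
        rw [ball_pi c hr]
        exact fun i _ ↦ hx i (Finset.notMem_empty i)
      simp [F, indicator_of_mem hxc]
    | insert i s hi ih =>
      intro x hx hxc
      have hupdate : ∀ t ∈ ball (c i) r, ∀ j, update x i t j ∈ ball (c j) r := by
        intro t ht j
        rcases eq_or_ne j i with rfl | hji
        · simpa using ht
        · rw [update_of_ne hji]
          by_cases hj : j ∈ s
          · rw [hxc j (Finset.mem_insert_of_mem hj)]
            exact mem_ball_self hr
          · exact hx j (by simp [hji, hj])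
      have hslice : DifferentiableOn ℂ (fun t ↦ f (update x i t)) (ball (c i) r) :=
        hf.comp (fun t _ ↦ (hasFDerivAt_update x t).differentiableAt.differentiableWithinAt)
          fun t ht ↦ by rw [ball_pi c hr]; exact fun j _ ↦ hupdate t ht j
      rw [lmarginal_insert _ hF hi, Finset.card_insert_of_notMem hi, pow_succ, mul_assoc]
      calc a ^ s.card * (a * ‖f x‖ₑ ^ 2)
          = a ^ s.card * (a * ‖f (update x i (c i))‖ₑ ^ 2) := by
            rw [← hxc i (Finset.mem_insert_self i s), update_eq_self]
        _ ≤ a ^ s.card * ∫⁻ t in ball (c i) r, ‖f (update x i t)‖ₑ ^ 2 := by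
            gcongr
            exact hslice.ofReal_mul_enorm_sq_le_lintegral_ball hr.le
        _ = ∫⁻ t in ball (c i) r, a ^ s.card * ‖f (update x i t)‖ₑ ^ 2 :=
            (lintegral_const_mul' _ _ (pow_ne_top ofReal_ne_top)).symm
        _ ≤ ∫⁻ t in ball (c i) r, (∫⋯∫⁻_s, F ∂μ) (update x i t) := by
            refine setLIntegral_mono' measurableSet_ball fun t ht ↦ ih _ (fun j _ ↦ hupdate t ht j)
              fun j hj ↦ ?_
            rw [update_of_ne (by rintro rfl; exact hi hj)]
            exact hxc j (Finset.mem_insert_of_mem hj)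
  calc a ^ Fintype.card ι * ‖f c‖ₑ ^ 2 ≤ (∫⋯∫⁻_Finset.univ, F ∂μ) c :=
        key Finset.univ c (by simp) fun _ _ ↦ rfl
    _ = ∫⁻ z in ball c r, F z := by
        rw [lmarginal_univ, ball_pi c hr, volume_pi, Measure.restrict_pi_pi]
    _ ≤ ∫⁻ z in ball c r, ‖f z‖ₑ ^ 2 := lintegral_mono (indicator_le_self _ _)

end Polydisc

theorem IsCompact.exists_enorm_sq_le_mul_setLIntegral {ι : Type*} [Fintype ι] {K U : Set (ι → ℂ)}
    (hK : IsCompact K) (hU : IsOpen U) (hKU : K ⊆ U) :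
    ∃ C : ℝ≥0, ∀ f : (ι → ℂ) → ℂ, DifferentiableOn ℂ f U →
      ∀ z ∈ K, ‖f z‖ₑ ^ 2 ≤ C * ∫⁻ w in U, ‖f w‖ₑ ^ 2 := by
  obtain ⟨δ, hδ, hδU⟩ := hK.exists_cthickening_subset_open hU hKU
  set a := ENNReal.ofReal (π * δ ^ 2) ^ Fintype.card ι
  have ha : a ≠ 0 := pow_ne_zero _ (ENNReal.ofReal_pos.2 (by positivity)).ne'
  refine ⟨(Real.toNNReal (π * δ ^ 2) ^ Fintype.card ι)⁻¹, fun f hf z hz ↦ ?_⟩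
  have hball : ball z δ ⊆ U :=
    ball_subset_closedBall.trans ((closedBall_subset_cthickening hz δ).trans hδU)
  have hpoly := (hf.mono hball).ofReal_pow_mul_enorm_sq_le_lintegral_ball hδ
  rw [ENNReal.mul_le_iff_le_inv ha (pow_ne_top ofReal_ne_top)] at hpoly
  refine hpoly.trans ?_
  rw [ENNReal.coe_inv (pow_ne_zero _ ?_), ENNReal.coe_pow]
  · exact mul_le_mul_right (lintegral_mono_set hball) _
  · exact (Real.toNNReal_pos.2 (by positivity)).ne'

namespace EuclideanSpace

variable {n : ℕ}

theorem volume_preserving_toLp_complex :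
    MeasurePreserving (WithLp.toLp 2 : (Fin n → ℂ) → EuclideanSpace ℂ (Fin n)) :=
  ⟨(MeasurableEquiv.toLp 2 _).measurable, rfl⟩

instance : IsFiniteMeasureOnCompacts (volume : Measure (EuclideanSpace ℂ (Fin n))) :=
  Measure.IsFiniteMeasureOnCompacts.map _
    (PiLp.continuousLinearEquiv 2 ℂ fun _ : Fin n ↦ ℂ).symm.toHomeomorph

theorem exists_enorm_sq_le_mul_setLIntegral {K U : Set (EuclideanSpace ℂ (Fin n))}
    (hK : IsCompact K) (hU : IsOpen U) (hKU : K ⊆ U) :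
    ∃ C : ℝ≥0, ∀ f : EuclideanSpace ℂ (Fin n) → ℂ, (∀ z ∈ U, DifferentiableAt ℂ f z) →
      ∀ z ∈ K, ‖f z‖ₑ ^ 2 ≤ C * ∫⁻ w in U, ‖f w‖ₑ ^ 2 := by
  set L := PiLp.continuousLinearEquiv 2 ℂ fun _ : Fin n ↦ ℂ
  obtain ⟨C, hC⟩ := (hK.image L.continuous).exists_enorm_sq_le_mul_setLIntegral
    (hU.preimage L.symm.continuous) (image_subset_iff.2 fun z hz ↦ by simpa using hKU hz)
  refine ⟨C, fun f hf z hz ↦ ?_⟩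
  calc ‖f z‖ₑ ^ 2 = ‖f (WithLp.toLp 2 (L z))‖ₑ ^ 2 := rfl
    _ ≤ C * ∫⁻ w in WithLp.toLp 2 ⁻¹' U, ‖f (WithLp.toLp 2 w)‖ₑ ^ 2 :=
        hC _ (fun w hw ↦ ((hf _ hw).comp w L.symm.differentiableAt).differentiableWithinAt) _
          (mem_image_of_mem L hz)
    _ = C * ∫⁻ w in U, ‖f w‖ₑ ^ 2 := by
        rw [volume_preserving_toLp_complex.setLIntegral_comp_preimage_emb
          (MeasurableEquiv.toLp 2 _).measurableEmbedding (fun w ↦ ‖f w‖ₑ ^ 2)]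

end EuclideanSpace

theorem projected_composition_stmt1_general
    (n : ℕ)
    (Ω : Set (EuclideanSpace ℂ (Fin n)))
    (hΩo : IsOpen Ω) (hΩb : Bornology.IsBounded Ω)
    (φ : EuclideanSpace ℂ (Fin n) → EuclideanSpace ℂ (Fin n))
    (hcpt : IsCompact (closure (φ '' Ω))) (hsub : closure (φ '' Ω) ⊆ Ω) :
    ∃ C : ℝ, 0 < C ∧ ∀ f : EuclideanSpace ℂ (Fin n) → ℂ, BergmanA2 Ω f →
      (∫⁻ z in Ω, (‖f (φ z)‖₊ : ℝ≥0∞) ^ 2) ≤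
        ENNReal.ofReal C * ∫⁻ z in Ω, (‖f z‖₊ : ℝ≥0∞) ^ 2 := by
  obtain ⟨C, hC⟩ := EuclideanSpace.exists_enorm_sq_le_mul_setLIntegral hcpt hΩo hsub
  lift volume Ω to ℝ≥0 using hΩb.measure_lt_top.ne with V hV
  refine ⟨V * C + 1, by positivity, fun f hf ↦ ?_⟩
  calc ∫⁻ z in Ω, ‖f (φ z)‖ₑ ^ 2 ≤ ∫⁻ _ in Ω, C * ∫⁻ w in Ω, ‖f w‖ₑ ^ 2 :=
        setLIntegral_mono' hΩo.measurableSet fun z hz ↦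
          hC f hf.1 (φ z) (subset_closure (mem_image_of_mem φ hz))
    _ = ((V * C : ℝ≥0) : ℝ≥0∞) * ∫⁻ w in Ω, ‖f w‖ₑ ^ 2 := by
        rw [setLIntegral_const, ← hV, ENNReal.coe_mul, mul_comm, mul_assoc]
    _ ≤ ENNReal.ofReal (V * C + 1) * ∫⁻ w in Ω, ‖f w‖ₑ ^ 2 := by
        gcongr
        rw [← ENNReal.ofReal_coe_nnreal]
        exact ENNReal.ofReal_le_ofReal (by simp)

/-- Lemma 1: if `φ(Ω)` is compactly contained in `Ω`, then the composition operator
`D_φ` is bounded on `A²(Ω)`. -/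
theorem projected_composition_stmt1
    (n : ℕ) (hn : 1 ≤ n)
    (Ω : Set (EuclideanSpace ℂ (Fin n)))
    (hΩo : IsOpen Ω) (hΩne : Ω.Nonempty) (hΩb : Bornology.IsBounded Ω)
    (φ : EuclideanSpace ℂ (Fin n) → EuclideanSpace ℂ (Fin n))
    (hφm : Measurable φ) (hφ : Set.MapsTo φ Ω Ω)
    (hcpt : IsCompact (closure (φ '' Ω))) (hsub : closure (φ '' Ω) ⊆ Ω) :
    ∃ C : ℝ, 0 < C ∧ ∀ f : EuclideanSpace ℂ (Fin n) → ℂ, BergmanA2 Ω f →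
      (∫⁻ z in Ω, (‖f (φ z)‖₊ : ℝ≥0∞) ^ 2) ≤
        ENNReal.ofReal C * ∫⁻ z in Ω, (‖f z‖₊ : ℝ≥0∞) ^ 2 :=
  projected_composition_stmt1_general n Ω hΩo hΩb φ hcpt hsub
end

section
/- Let n ≥ 1 and let Ω ⊆ ℂⁿ be a smooth bounded domain. Let φ : ℂⁿ → ℂⁿ be twice continuously real-differentiable (C²) on an open neighborhood of closure(Ω), with φ(Ω) ⊆ Ω and φ(closure(Ω)) ⊆ closure(Ω). Set K := φ(∂Ω) ∩ ∂Ω and F := φ⁻¹(K) ∩ closure(Ω), where ∂Ω denotes the topological frontier of Ω. Assume there is an open set U with F ⊆ U such that φ is injective on U ∩ Ω; that for every z ∈ F the real Fréchet derivative Dφ(z) is complex-linear; and that there exists m > 0 with |J_φ(z)| ≥ m for all z ∈ F, where J_φ(z) is the determinant of Dφ(z) regarded as an ℝ-linear endomorphism of ℂⁿ. Then there exist s > 0 and an open set U' with F ⊆ U' such that for all z ∈ U' ∩ Ω, δ(z) ≤ s · δ(φ(z)), where δ(z) denotes the distance from z to ∂Ω. -/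
open Set Metric

/-- A segment from a point of an open set to a point outside it meets the frontier. -/
lemma segment_meets_frontier {E : Type*} [NormedAddCommGroup E] [NormedSpace ℝ E]
    {Ω : Set E} (hΩo : IsOpen Ω) {z u : E} (hz : z ∈ Ω) (hu : u ∉ Ω) :
    ∃ p ∈ segment ℝ z u, p ∈ frontier Ω := by
  by_contra h
  push_neg at h
  have hcover : segment ℝ z u ⊆ Ω ∪ (closure Ω)ᶜ := by
    intro p hp
    by_cases hpΩ : p ∈ Ω
    · exact Or.inl hpΩ
    · refine Or.inr ?_
      intro hpcl
      exact h p hp ⟨hpcl, by rwa [hΩo.interior_eq]⟩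
  have hne1 : (segment ℝ z u ∩ Ω).Nonempty := ⟨z, left_mem_segment ℝ z u, hz⟩
  have hne2 : (segment ℝ z u ∩ (closure Ω)ᶜ).Nonempty := by
    refine ⟨u, right_mem_segment ℝ z u, ?_⟩
    intro hucl
    exact h u (right_mem_segment ℝ z u) ⟨hucl, by rwa [hΩo.interior_eq]⟩
  have := (convex_segment z u).isPreconnected Ω (closure Ω)ᶜ hΩo
    isClosed_closure.isOpen_compl hcover hne1 hne2
  obtain ⟨p, -, hp1, hp2⟩ := this
  exact hp2 (subset_closure hp1)

/-- The boundary-distance comparison inside the proof of Theorem 2: under the hypotheses of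
Theorem 2 there are `s > 0` and an open neighborhood `U'` of `F` with
`δ(z) ≤ s·δ(φ(z))` for all `z ∈ U' ∩ Ω`, where `δ` is the distance to `∂Ω`. -/
theorem projected_composition_stmt8
    (n : ℕ) (hn : 1 ≤ n)
    (Ω : Set (EuclideanSpace ℂ (Fin n)))
    (hΩo : IsOpen Ω) (hΩne : Ω.Nonempty) (hΩb : Bornology.IsBounded Ω)
    -- `Ω` is a smooth bounded domain with defining function `r`
    (hsmooth : ∃ (W : Set (EuclideanSpace ℂ (Fin n))) (r : EuclideanSpace ℂ (Fin n) → ℝ),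
      IsOpen W ∧ closure Ω ⊆ W ∧ ContDiff ℝ (⊤ : ℕ∞) r ∧
        Ω = {z ∈ W | r z < 0} ∧ ∀ z ∈ W, r z = 0 → fderiv ℝ r z ≠ 0)
    (φ : EuclideanSpace ℂ (Fin n) → EuclideanSpace ℂ (Fin n))
    (hφC2 : ∃ W' : Set (EuclideanSpace ℂ (Fin n)),
      IsOpen W' ∧ closure Ω ⊆ W' ∧ ContDiffOn ℝ 2 φ W')
    (hφ : Set.MapsTo φ Ω Ω) (hφcl : Set.MapsTo φ (closure Ω) (closure Ω))
    (K F : Set (EuclideanSpace ℂ (Fin n)))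
    (hK : K = φ '' frontier Ω ∩ frontier Ω)
    (hF : F = φ ⁻¹' K ∩ closure Ω)
    (U : Set (EuclideanSpace ℂ (Fin n))) (hUo : IsOpen U) (hFU : F ⊆ U)
    (hinj : Set.InjOn φ (U ∩ Ω))
    (hCR : ∀ z ∈ F, ∀ (c : ℂ) (v : EuclideanSpace ℂ (Fin n)),
      fderiv ℝ φ z (c • v) = c • fderiv ℝ φ z v)
    (m : ℝ) (hm : 0 < m)
    (hJac : ∀ z ∈ F, m ≤ |LinearMap.det
      ((fderiv ℝ φ z : EuclideanSpace ℂ (Fin n) →L[ℝ] EuclideanSpace ℂ (Fin n)) :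
        EuclideanSpace ℂ (Fin n) →ₗ[ℝ] EuclideanSpace ℂ (Fin n))|) :
    ∃ s : ℝ, 0 < s ∧ ∃ U' : Set (EuclideanSpace ℂ (Fin n)),
      IsOpen U' ∧ F ⊆ U' ∧ ∀ z ∈ U' ∩ Ω,
        Metric.infDist z (frontier Ω) ≤ s * Metric.infDist (φ z) (frontier Ω) := by
  classical
  obtain ⟨W', hW'o, hclW', hC2⟩ := hφC2
  have hfrb : Bornology.IsBounded (frontier Ω) :=
    hΩb.closure.subset frontier_subset_closure
  have hfrc : IsCompact (frontier Ω) :=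
    Metric.isCompact_of_isClosed_isBounded isClosed_frontier hfrb
  -- the local claim
  have hloc : ∀ z₀ ∈ F, ∃ (L : ℝ) (V : Set (EuclideanSpace ℂ (Fin n))), 0 < L ∧
      IsOpen V ∧ z₀ ∈ V ∧ ∀ z ∈ V ∩ Ω,
        Metric.infDist z (frontier Ω) ≤ L * Metric.infDist (φ z) (frontier Ω) := by
    intro z₀ hz₀
    have hz₀cl : z₀ ∈ closure Ω := (hF ▸ hz₀).2
    have hz₀W' : z₀ ∈ W' := hclW' hz₀cl
    have hφz₀K : φ z₀ ∈ K := (hF ▸ hz₀).1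
    have hφz₀fr : φ z₀ ∈ frontier Ω := (hK ▸ hφz₀K).2
    -- derivative data
    have hdet : ((fderiv ℝ φ z₀ : EuclideanSpace ℂ (Fin n) →L[ℝ] EuclideanSpace ℂ (Fin n)) :
        EuclideanSpace ℂ (Fin n) →ₗ[ℝ] EuclideanSpace ℂ (Fin n)).det ≠ 0 := by
      intro h0
      have := hJac z₀ hz₀
      rw [h0] at this
      simp at this
      linarith
    have cd : ContDiffAt ℝ 2 φ z₀ := hC2.contDiffAt (hW'o.mem_nhds hz₀W')
    have hdiff : HasFDerivAt φ (fderiv ℝ φ z₀) z₀ :=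
      (cd.differentiableAt (by norm_num)).hasFDerivAt
    set A : EuclideanSpace ℂ (Fin n) ≃L[ℝ] EuclideanSpace ℂ (Fin n) :=
      (fderiv ℝ φ z₀).toContinuousLinearEquivOfDetNeZero hdet with hA
    have hAcoe : (A : EuclideanSpace ℂ (Fin n) →L[ℝ] EuclideanSpace ℂ (Fin n))
        = fderiv ℝ φ z₀ := by
      rw [hA]; exact ContinuousLinearMap.coe_toContinuousLinearEquivOfDetNeZero _ _
    have strict : HasStrictFDerivAt φ
        (A : EuclideanSpace ℂ (Fin n) →L[ℝ] EuclideanSpace ℂ (Fin n)) z₀ :=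
      cd.hasStrictFDerivAt' (hAcoe ▸ hdiff) (by norm_num)
    set f := strict.toOpenPartialHomeomorph φ with hfdef
    have hfcoe : (f : EuclideanSpace ℂ (Fin n) → EuclideanSpace ℂ (Fin n)) = φ :=
      strict.toOpenPartialHomeomorph_coe
    have hz₀src : z₀ ∈ f.source := strict.mem_toOpenPartialHomeomorph_source
    have hz₀tar : φ z₀ ∈ f.target := strict.image_mem_toOpenPartialHomeomorph_target
    -- local inverse is Lipschitz near φ z₀
    have ginv := strict.to_localInverse
    obtain ⟨Lip, t, ht, hlip⟩ := ginv.exists_lipschitzOnWith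
    have hnhds : t ∩ f.target ∈ nhds (φ z₀) :=
      Filter.inter_mem ht (f.open_target.mem_nhds hz₀tar)
    obtain ⟨ε, hε, hball⟩ := Metric.mem_nhds_iff.1 hnhds
    refine ⟨(Lip : ℝ) + 1, f.source ∩ (W' ∩ φ ⁻¹' Metric.ball (φ z₀) (ε / 2)),
      by positivity, ?_, ⟨hz₀src, hz₀W', by simpa using half_pos hε⟩, ?_⟩
    · exact f.open_source.inter
        (hC2.continuousOn.isOpen_inter_preimage hW'o Metric.isOpen_ball)
    · rintro z ⟨⟨hzsrc, -, hzball⟩, hzΩ⟩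
      have hzball' : dist (φ z) (φ z₀) < ε / 2 := by simpa [Metric.mem_ball] using hzball
      obtain ⟨w, hwfr, hwd⟩ := hfrc.exists_infDist_eq_dist ⟨φ z₀, hφz₀fr⟩ (φ z)
      have hδφ0 : 0 ≤ Metric.infDist (φ z) (frontier Ω) := Metric.infDist_nonneg
      have hδφle : Metric.infDist (φ z) (frontier Ω) ≤ dist (φ z) (φ z₀) :=
        Metric.infDist_le_dist_of_mem hφz₀fr
      have hwball : w ∈ Metric.ball (φ z₀) ε := by
        have : dist w (φ z₀) ≤ dist w (φ z) + dist (φ z) (φ z₀) := dist_triangle _ _ _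
        have h1 : dist w (φ z) < ε / 2 := by
          rw [dist_comm, ← hwd]; exact lt_of_le_of_lt hδφle hzball'
        simp only [Metric.mem_ball]
        linarith
      have hwt : w ∈ t := (hball hwball).1
      have hwtar : w ∈ f.target := (hball hwball).2
      have hφzt : φ z ∈ t := by
        apply (hball _).1
        have : dist (φ z) (φ z₀) < ε := by linarith
        simpa [Metric.mem_ball] using this
      set u := f.symm w with hu
      have husrc : u ∈ f.source := f.map_target hwtar
      have hφu : φ u = w := by
        have := f.right_inv hwtar
        rwa [← hfcoe]
      have huΩ : u ∉ Ω := by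
        intro huΩ
        have : φ u ∈ Ω := hφ huΩ
        rw [hφu] at this
        rw [hΩo.frontier_eq] at hwfr
        exact hwfr.2 this
      -- Lipschitz estimate : localInverse = f.symm
      have hgw : strict.localInverse φ _ _ w = u := rfl
      have hgφz : strict.localInverse φ _ _ (φ z) = z := by
        have := f.left_inv hzsrc
        rw [hfcoe] at this
        exact this
      have hdistuz : dist u z ≤ (Lip : ℝ) * dist w (φ z) := by
        have := hlip.dist_le_mul w hwt (φ z) hφzt
        rwa [hgw, hgφz] at this
      obtain ⟨p, hpseg, hpfr⟩ := segment_meets_frontier hΩo hzΩ huΩ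
      have hdzp : dist z p ≤ dist z u := by
        have := dist_add_dist_of_mem_segment hpseg
        have h0 : 0 ≤ dist p u := dist_nonneg
        linarith
      calc Metric.infDist z (frontier Ω) ≤ dist z p := Metric.infDist_le_dist_of_mem hpfr
        _ ≤ dist z u := hdzp
        _ = dist u z := dist_comm _ _
        _ ≤ (Lip : ℝ) * dist w (φ z) := hdistuz
        _ = (Lip : ℝ) * Metric.infDist (φ z) (frontier Ω) := by rw [dist_comm, ← hwd]
        _ ≤ ((Lip : ℝ) + 1) * Metric.infDist (φ z) (frontier Ω) := by nlinarith
  -- compactness of F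
  have hKcl : IsClosed K := by
    have himg : IsCompact (φ '' frontier Ω) :=
      hfrc.image_of_continuousOn (hC2.continuousOn.mono
        (frontier_subset_closure.trans hclW'))
    rw [hK]
    exact (himg.inter_right isClosed_frontier).isClosed
  have hFc : IsCompact F := by
    have hFclosed : IsClosed F := by
      have := (hC2.continuousOn.mono hclW').preimage_isClosed_of_isClosed
        isClosed_closure hKcl
      rw [hF, Set.inter_comm]
      exact this
    exact Metric.isCompact_of_isClosed_isBounded hFclosed
      (hΩb.closure.subset (by rw [hF]; exact Set.inter_subset_right))
  choose! L V hL hVo hVmem hVprop using hloc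
  have hcover : F ⊆ ⋃ z₀ ∈ F, V z₀ := fun z₀ hz₀ =>
    Set.mem_biUnion hz₀ (hVmem z₀ hz₀)
  obtain ⟨b, hbF, hbfin, hbcov⟩ := hFc.elim_finite_subcover_image
    (fun z₀ hz₀ => hVo z₀ hz₀) hcover
  set s : ℝ := 1 + ∑ i ∈ hbfin.toFinset, L i with hs
  have hLle : ∀ i ∈ b, L i ≤ s := by
    intro i hi
    have h1 : L i ≤ ∑ j ∈ hbfin.toFinset, L j :=
      Finset.single_le_sum (fun j hj => (hL j (hbF (hbfin.mem_toFinset.1 hj))).le)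
        (hbfin.mem_toFinset.2 hi)
    simp only [hs]; linarith
  have hsum : 0 ≤ ∑ i ∈ hbfin.toFinset, L i :=
    Finset.sum_nonneg fun j hj => (hL j (hbF (hbfin.mem_toFinset.1 hj))).le
  refine ⟨s, by simp only [hs]; linarith, ⋃ i ∈ b, V i, isOpen_biUnion fun i hi => hVo i (hbF hi),
    hbcov, ?_⟩
  rintro z ⟨hzU, hzΩ⟩
  obtain ⟨i, hib, hzV⟩ := Set.mem_iUnion₂.1 hzU
  calc Metric.infDist z (frontier Ω)
      ≤ L i * Metric.infDist (φ z) (frontier Ω) := hVprop i (hbF hib) z ⟨hzV, hzΩ⟩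
    _ ≤ s * Metric.infDist (φ z) (frontier Ω) :=
        mul_le_mul_of_nonneg_right (hLle i hib) Metric.infDist_nonneg
end
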